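/- arXiv:2208.08471 — 2 statements merged into one kernel-verified Lean document; each statement's English description precedes it below -/
import Mathlib

section
/- Let X, X₁, X₂, … be iid Pareto(α) random variables with α ∈ (0,1], and let N be an ℕ-valued (counting) random variable independent of the sequence. Then X·𝟙{N ≥ 1} ≤_st (1/N)∑_{i=1}^{N} Xᵢ (with the convention that the average is 0 when N = 0), and N·X ≤_st ∑_{i=1}^{N} Xᵢ. -/
open MeasureTheory ProbabilityTheory Set

/-- `X` is a Pareto(α) random variable under `P`: `P(X > t) = t^{-α}` for `t ≥ 1`,
and `X ≥ 1` almost surely. -/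
def IsPareto {Ω : Type*} [MeasurableSpace Ω] (P : Measure Ω) (X : Ω → ℝ) (α : ℝ) : Prop :=
  Measurable X ∧ P {ω | 1 ≤ X ω} = 1 ∧
    ∀ t : ℝ, 1 ≤ t → P {ω | t < X ω} = ENNReal.ofReal (t ^ (-α))

/-!
Fix `n ≥ 1` and `t ≥ 1`, and put `b = n (t^α - 1) + 1`. Since every `Xᵢ ≥ 1`, a single
`Xⱼ > b^{1/α}` already forces `∑ Xᵢ^α > n t^α`, and concavity of `x ↦ x^α` (`α ≤ 1`) turns this
into `(1/n) ∑ Xᵢ > t`. No `Xᵢ` exceeds `b^{1/α}` with probability `(1 - 1/b)^n`, which Bernoulli's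
inequality bounds by `1 - t^{-α}`; hence `P((1/n) ∑ Xᵢ > t) ≥ t^{-α} = P(X > t)`.
For a random `N` independent of the sample, condition on `{N = n}`.
-/

open Finset

lemma pow_div_add_one_le_div_add {c : ℝ} (hc : 0 ≤ c) {n : ℕ} (hn : n ≠ 0) :
    (c / (c + 1)) ^ n ≤ c / (c + n) := by
  obtain rfl | hc := hc.eq_or_lt
  · simp [hn]
  have bernoulli : 1 + n * c⁻¹ ≤ (1 + c⁻¹) ^ n :=
    one_add_mul_le_pow (by linarith [inv_pos.2 hc]) n
  calc (c / (c + 1)) ^ n = ((1 + c⁻¹) ^ n)⁻¹ := by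
        rw [← inv_pow]; congr 1; field_simp
    _ ≤ (1 + n * c⁻¹)⁻¹ := inv_anti₀ (by positivity) bernoulli
    _ = c / (c + n) := by field_simp

lemma one_sub_inv_pow_le {y : ℝ} (hy : 1 ≤ y) {n : ℕ} (hn : n ≠ 0) :
    (1 - (n * (y - 1) + 1)⁻¹) ^ n ≤ 1 - y⁻¹ := by
  have hc : 0 ≤ (n : ℝ) * (y - 1) := mul_nonneg n.cast_nonneg (by linarith)
  have hb : (n : ℝ) * (y - 1) + 1 ≠ 0 := by positivity
  have hn' : (n : ℝ) ≠ 0 := by exact_mod_cast hn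
  calc (1 - (n * (y - 1) + 1)⁻¹) ^ n = (n * (y - 1) / (n * (y - 1) + 1)) ^ n := by
        congr 1; field_simp; ring
    _ ≤ n * (y - 1) / (n * (y - 1) + n) := pow_div_add_one_le_div_add hc hn
    _ = 1 - y⁻¹ := by rw [show (n : ℝ) * (y - 1) + n = n * y by ring]; field_simp

lemma lt_sum_div_card_of_lt_rpow {ι : Type*} {s : Finset ι} {x : ι → ℝ} {α t : ℝ}
    (hα₀ : 0 < α) (hα₁ : α ≤ 1) (ht : 0 ≤ t) (hx : ∀ i ∈ s, 1 ≤ x i) {j : ι} (hj : j ∈ s)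
    (hxj : #s * (t ^ α - 1) + 1 < x j ^ α) :
    t < (∑ i ∈ s, x i) / #s := by
  have hcard : (0 : ℝ) < #s := by exact_mod_cast card_pos.2 ⟨j, hj⟩
  have hsum : #s * t ^ α < ∑ i ∈ s, x i ^ α := by
    have hle : x j ^ α - 1 ≤ ∑ i ∈ s, (x i ^ α - 1) :=
      single_le_sum (f := fun i ↦ x i ^ α - 1)
        (fun i hi ↦ by linarith [Real.one_le_rpow (hx i hi) hα₀.le]) hj
    rw [sum_sub_distrib, sum_const, nsmul_one] at hle
    linarith
  have jensen : ∑ i ∈ s, (#s : ℝ)⁻¹ • x i ^ α ≤ (∑ i ∈ s, (#s : ℝ)⁻¹ • x i) ^ α :=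
    (Real.concaveOn_rpow hα₀.le hα₁).le_map_sum (fun _ _ ↦ by positivity)
      (by simp [hcard.ne']) (fun i hi ↦ mem_Ici.2 (by linarith [hx i hi]))
  simp only [smul_eq_mul, ← mul_sum] at jensen
  have hmean : (0 : ℝ) ≤ (∑ i ∈ s, x i) / #s :=
    div_nonneg (sum_nonneg fun i hi ↦ by linarith [hx i hi]) hcard.le
  rw [← Real.rpow_lt_rpow_iff ht hmean hα₀, div_eq_inv_mul]
  calc t ^ α = (#s : ℝ)⁻¹ * (#s * t ^ α) := by field_simp
    _ < (#s : ℝ)⁻¹ * ∑ i ∈ s, x i ^ α := by gcongr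
    _ ≤ _ := jensen

namespace IsPareto

variable {Ω : Type*} [MeasurableSpace Ω] {P : Measure Ω} [IsProbabilityMeasure P] {α : ℝ}

lemma ae_one_le {X : Ω → ℝ} (hX : IsPareto P X α) : ∀ᵐ ω ∂P, 1 ≤ X ω :=
  (ae_iff_measure_eq (measurableSet_le measurable_const hX.1).nullMeasurableSet).2
    (by rw [hX.2.1, measure_univ])

lemma measure_preimage_Iic {X : Ω → ℝ} (hX : IsPareto P X α) {m : ℝ} (hm : 1 ≤ m) :
    P (X ⁻¹' Iic m) = ENNReal.ofReal (1 - m ^ (-α)) := by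
  rw [← compl_Ioi, preimage_compl, prob_compl_eq_one_sub (measurableSet_Ioi.preimage hX.1),
    ENNReal.ofReal_sub _ (by positivity), ENNReal.ofReal_one]
  exact congrArg _ (hX.2.2 m hm)

lemma measure_biInter_preimage_Iic {ι : Type*} {Xs : ι → Ω → ℝ} (hXs : ∀ i, IsPareto P (Xs i) α)
    (hind : iIndepFun Xs P) (s : Finset ι) {m : ℝ} (hm : 1 ≤ m) :
    P (⋂ i ∈ s, Xs i ⁻¹' Iic m) = ENNReal.ofReal (1 - m ^ (-α)) ^ #s := by
  rw [hind.meas_biInter fun i _ ↦ ⟨Iic m, measurableSet_Iic, rfl⟩,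
    prod_congr rfl fun i _ ↦ (hXs i).measure_preimage_Iic hm, prod_const]

lemma ofReal_rpow_neg_le_measure_lt_mean (hα : α ∈ Set.Ioc 0 1) {Xs : ℕ → Ω → ℝ}
    (hXs : ∀ i, IsPareto P (Xs i) α) (hind : iIndepFun Xs P) {n : ℕ} (hn : n ≠ 0) {t : ℝ}
    (ht : 1 ≤ t) :
    ENNReal.ofReal (t ^ (-α)) ≤ P {ω | t < (∑ i ∈ range n, Xs i ω) / n} := by
  obtain ⟨hα₀, hα₁⟩ := hα
  have htα : 1 ≤ t ^ α := Real.one_le_rpow ht hα₀.le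
  set b : ℝ := n * (t ^ α - 1) + 1
  have hb : 1 ≤ b := by have := n.cast_nonneg (α := ℝ); nlinarith
  set m : ℝ := b ^ α⁻¹
  have hm : 1 ≤ m := Real.one_le_rpow hb (by positivity)
  set E : Set Ω := ⋃ i ∈ range n, Xs i ⁻¹' Ioi m
  have hE : MeasurableSet E :=
    .biUnion (to_countable _) fun i _ ↦ measurableSet_Ioi.preimage (hXs i).1
  have hEc : P Eᶜ ≤ ENNReal.ofReal (1 - t ^ (-α)) := by
    have hmα : m ^ (-α) = b⁻¹ := by
      rw [Real.rpow_neg (by positivity), Real.rpow_inv_rpow (by positivity) hα₀.ne']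
    simp only [E, compl_iUnion₂, ← preimage_compl, compl_Ioi]
    rw [measure_biInter_preimage_Iic hXs hind _ hm, card_range, ← ENNReal.ofReal_pow (by
      rw [hmα, sub_nonneg]; exact inv_le_one_of_one_le₀ hb), hmα, Real.rpow_neg (by positivity)]
    exact ENNReal.ofReal_le_ofReal (one_sub_inv_pow_le htα hn)
  have hEsub : E ≤ᵐ[P] {ω | t < (∑ i ∈ range n, Xs i ω) / n} := by
    filter_upwards [ae_all_iff.2 fun i ↦ (hXs i).ae_one_le] with ω hω hωE
    obtain ⟨j, hj, hjm⟩ := mem_iUnion₂.1 hωE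
    have hxj : b < Xs j ω ^ α :=
      (Real.rpow_inv_lt_iff_of_pos (by positivity) (by linarith [hω j]) hα₀).1 hjm
    have := lt_sum_div_card_of_lt_rpow (x := fun i ↦ Xs i ω) (t := t) hα₀ hα₁ (by linarith)
      (fun i _ ↦ hω i) hj (by rwa [card_range])
    rwa [card_range] at this
  have hle1 : ENNReal.ofReal (t ^ (-α)) ≤ 1 :=
    ENNReal.ofReal_le_one.2 (Real.rpow_le_one_of_one_le_of_nonpos ht (by linarith))
  calc ENNReal.ofReal (t ^ (-α)) = 1 - ENNReal.ofReal (1 - t ^ (-α)) := by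
        rw [ENNReal.ofReal_sub _ (by positivity), ENNReal.ofReal_one,
          ENNReal.sub_sub_cancel ENNReal.one_ne_top hle1]
    _ ≤ 1 - P Eᶜ := tsub_le_tsub_left hEc 1
    _ = P E := by rw [← prob_compl_eq_one_sub hE.compl, compl_compl]
    _ ≤ _ := measure_mono_ae hEsub

lemma measure_lt_le_measure_lt_mean (hα : α ∈ Set.Ioc 0 1) {X : Ω → ℝ} {Xs : ℕ → Ω → ℝ}
    (hX : IsPareto P X α) (hXs : ∀ i, IsPareto P (Xs i) α) (hind : iIndepFun Xs P) {n : ℕ}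
    (hn : n ≠ 0) (t : ℝ) :
    P {ω | t < X ω} ≤ P {ω | t < (∑ i ∈ range n, Xs i ω) / n} := by
  obtain ht | ht := le_or_gt 1 t
  · rw [hX.2.2 t ht]
    exact ofReal_rpow_neg_le_measure_lt_mean hα hXs hind hn ht
  have hmean : ∀ᵐ ω ∂P, t < (∑ i ∈ range n, Xs i ω) / n := by
    filter_upwards [ae_all_iff.2 fun i ↦ (hXs i).ae_one_le] with ω hω
    have hsum : (n : ℝ) ≤ ∑ i ∈ range n, Xs i ω := by
      simpa using card_nsmul_le_sum (range n) (fun i ↦ Xs i ω) 1 fun i _ ↦ hω i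
    have hn' : (0 : ℝ) < n := by positivity
    rw [lt_div_iff₀ hn']
    nlinarith
  calc P {ω | t < X ω} ≤ P univ := measure_mono (subset_univ _)
    _ ≤ _ := measure_mono_ae (hmean.mono fun _ h _ ↦ h)

lemma measure_lt_mul_le_measure_lt_sum (hα : α ∈ Set.Ioc 0 1) {X : Ω → ℝ}
    {Xs : ℕ → Ω → ℝ} (hX : IsPareto P X α) (hXs : ∀ i, IsPareto P (Xs i) α)
    (hind : iIndepFun Xs P) {n : ℕ} (hn : n ≠ 0) (t : ℝ) :
    P {ω | t < n * X ω} ≤ P {ω | t < ∑ i ∈ range n, Xs i ω} := by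
  have hn' : (0 : ℝ) < n := by positivity
  have h := measure_lt_le_measure_lt_mean hα hX hXs hind hn (t / n)
  simp only [div_lt_div_iff_of_pos_right hn'] at h
  simpa only [div_lt_iff₀' hn'] using h

end IsPareto

section Conditioning

variable {Ω β : Type*} [MeasurableSpace Ω] [MeasurableSpace β] {P : Measure Ω} {N : Ω → ℕ}

lemma ProbabilityTheory.IndepFun.measure_mem_eq_tsum {Y : Ω → β} (hN : Measurable N)
    (hY : Measurable Y) (hNY : IndepFun N Y P) {A : ℕ → Set β} (hA : ∀ n, MeasurableSet (A n)) :
    P {ω | Y ω ∈ A (N ω)} = ∑' n, P (N ⁻¹' {n}) * P (Y ⁻¹' A n) := by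
  have hdecomp : {ω | Y ω ∈ A (N ω)} = ⋃ n, N ⁻¹' {n} ∩ Y ⁻¹' A n := by ext; simp
  rw [hdecomp, measure_iUnion]
  · exact tsum_congr fun n ↦
      hNY.measure_inter_preimage_eq_mul _ _ (measurableSet_singleton n) (hA n)
  · exact fun a b hab ↦ ((Set.disjoint_singleton.2 hab).preimage N).mono inter_subset_left
      inter_subset_left
  · exact fun n ↦ (hN (measurableSet_singleton n)).inter (hY (hA n))

lemma ProbabilityTheory.IndepFun.measure_mem_le {γ : Type*} [MeasurableSpace γ] {Y : Ω → β}
    {Z : Ω → γ} (hN : Measurable N) (hY : Measurable Y) (hZ : Measurable Z)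
    (hNY : IndepFun N Y P) (hNZ : IndepFun N Z P) {A : ℕ → Set β} {B : ℕ → Set γ}
    (hA : ∀ n, MeasurableSet (A n)) (hB : ∀ n, MeasurableSet (B n))
    (hAB : ∀ n, P (Y ⁻¹' A n) ≤ P (Z ⁻¹' B n)) :
    P {ω | Y ω ∈ A (N ω)} ≤ P {ω | Z ω ∈ B (N ω)} := by
  rw [hNY.measure_mem_eq_tsum hN hY hA, hNZ.measure_mem_eq_tsum hN hZ hB]
  exact ENNReal.tsum_le_tsum fun n ↦ mul_le_mul_right (hAB n) _

end Conditioning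

/-- Collective risk model: for iid Pareto(α), `α ∈ (0,1]`, and a counting random
variable `N` independent of the losses, `X·𝟙{N ≥ 1} ≤_st (1/N)∑_{i<N} Xᵢ` and
`N·X ≤_st ∑_{i<N} Xᵢ` (the empty average/sum being 0). -/
theorem stmt9 {Ω : Type*} [MeasurableSpace Ω] (P : Measure Ω) [IsProbabilityMeasure P]
    (α : ℝ) (hα : α ∈ Set.Ioc (0:ℝ) 1)
    (X : Ω → ℝ) (Xs : ℕ → Ω → ℝ) (N : Ω → ℕ)
    (hX : IsPareto P X α) (hXs : ∀ i, IsPareto P (Xs i) α)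
    (hind : iIndepFun Xs P)
    (hN : Measurable N)
    (hNX : IndepFun N X P)
    (hNXs : IndepFun N (fun ω i => Xs i ω) P) :
    (∀ t : ℝ, P {ω | t < (if 1 ≤ N ω then X ω else 0)}
        ≤ P {ω | t < (∑ i ∈ Finset.range (N ω), Xs i ω) / (N ω : ℝ)})
    ∧ (∀ t : ℝ, P {ω | t < (N ω : ℝ) * X ω}
        ≤ P {ω | t < ∑ i ∈ Finset.range (N ω), Xs i ω}) := by
  have hXsm : Measurable fun ω i ↦ Xs i ω := measurable_pi_lambda _ fun i ↦ (hXs i).1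
  refine ⟨fun t ↦ ?_, fun t ↦ ?_⟩
  · refine hNX.measure_mem_le (A := fun n ↦ {x | t < if 1 ≤ n then x else 0})
      (B := fun n ↦ {v : ℕ → ℝ | t < (∑ i ∈ range n, v i) / n}) hN hX.1 hXsm hNXs
      (fun n ↦ by measurability) (fun n ↦ by measurability) fun n ↦ ?_
    rcases n with _ | n
    · simp
    · simpa using hX.measure_lt_le_measure_lt_mean hα hXs hind n.succ_ne_zero t
  · refine hNX.measure_mem_le (A := fun n ↦ {x | t < n * x})
      (B := fun n ↦ {v : ℕ → ℝ | t < ∑ i ∈ range n, v i}) hN hX.1 hXsm hNXs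
      (fun n ↦ by measurability) (fun n ↦ by measurability) fun n ↦ ?_
    rcases n with _ | n
    · simp
    · exact hX.measure_lt_mul_le_measure_lt_sum hα hXs hind n.succ_ne_zero t
end

section
/- Let X₁,…,Xₙ be iid Pareto(α) with α ∈ (0,1], let A₁,…,Aₙ be events independent of (X₁,…,Xₙ), and let (θ₁,…,θₙ) ∈ ℝ₊ⁿ. Let λ ≥ ∑ᵢ θᵢ, let X be Pareto(α) independent of an event A with λ·ℙ(A) = ∑ᵢ θᵢ ℙ(Aᵢ). Then λ·X·𝟙_A ≤_st ∑ᵢ θᵢ Xᵢ 𝟙_{Aᵢ}. -/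
open MeasureTheory ProbabilityTheory Set

/-!
Condition on which of the events occur: with `B_S = occurring A ⁻¹' {S}`, independence of the
losses from the events gives `P(∑ᵢ θᵢ Xᵢ 𝟙_{Aᵢ} > t) = ∑_S P(∑_{i ∈ S} θᵢ Xᵢ > t) P(B_S)`.

For iid Pareto(α) with `α ≤ 1`, a weighted sum with total weight `Θ` dominates `Θ X`. For `t > Θ`
put `β = t - Θ`: off the event `⋂ᵢ {θᵢ Xᵢ ≤ β + θᵢ}` the sum exceeds `t` (as `Xⱼ ≥ 1`), and by
independence that event has probability `∏ᵢ (1 - qᵢ ^ α)` with `qᵢ = θᵢ / (β + θᵢ)`. Concavity of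
`x ↦ x ^ α` and the Weierstrass product inequality bound this by `1 - (Θ / t) ^ α = P(Θ X ≤ t)`.

Since `c ↦ P(c X > t)` is concave and vanishes at `0`, `P(Θ_S X > t) ≥ (Θ_S / λ) P(λ X > t)`, and
summing over `S` with `∑_S Θ_S P(B_S) = ∑ᵢ θᵢ P(Aᵢ) = λ P(A)` gives the claim.
-/

lemma ConcaveOn.map_add_map_le_of_le_of_le {s : Set ℝ} {f : ℝ → ℝ} (hf : ConcaveOn ℝ s f)
    {a b c d : ℝ} (hc : c ∈ s) (hd : d ∈ s) (hda : d ≤ a) (hac : a ≤ c) (hsum : a + b = c + d) :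
    f c + f d ≤ f a + f b := by
  rcases hda.trans hac |>.eq_or_lt with hdc | hdc
  · obtain rfl : a = c := le_antisymm hac (hdc ▸ hda)
    obtain rfl : b = d := by linarith
    rfl
  set μ := (a - d) / (c - d)
  have hμ : μ * (c - d) = a - d := div_mul_cancel₀ _ (sub_pos.2 hdc).ne'
  have hμ0 : 0 ≤ μ := div_nonneg (sub_nonneg.2 hda) (sub_pos.2 hdc).le
  have hμ1 : 0 ≤ 1 - μ := sub_nonneg.2 <| (div_le_one (sub_pos.2 hdc)).2 (by linarith)
  have ha := hf.2 hc hd hμ0 hμ1 (by ring)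
  have hb := hf.2 hc hd hμ1 hμ0 (by ring)
  simp only [smul_eq_mul] at ha hb
  rw [show μ * c + (1 - μ) * d = a by linarith] at ha
  rw [show (1 - μ) * c + μ * d = b by linarith] at hb
  linarith

section Scalar

variable {α : ℝ}

lemma one_sub_rpow_mul_one_sub_rpow_le (hα0 : 0 < α) (hα1 : α ≤ 1) {a b : ℝ}
    (ha : a ∈ Icc (0 : ℝ) 1) (hb : b ∈ Icc (0 : ℝ) 1) :
    (1 - a ^ α) * (1 - b ^ α) ≤ 1 - (1 - (1 - a) * (1 - b)) ^ α := by
  obtain ⟨ha0, ha1⟩ := ha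
  obtain ⟨hb0, hb1⟩ := hb
  have hab : 0 ≤ a * b := mul_nonneg ha0 hb0
  -- `(1 - (1 - a) * (1 - b), a * b)` majorizes `(a, b)`.
  have key := (Real.concaveOn_rpow hα0.le hα1).map_add_map_le_of_le_of_le
    (a := a) (b := b) (c := 1 - (1 - a) * (1 - b)) (d := a * b)
    (by simp only [mem_Ici]; nlinarith [mul_nonneg (sub_nonneg.2 ha1) hb0]) hab
    (by nlinarith [mul_nonneg ha0 (sub_nonneg.2 hb1)])
    (by nlinarith [mul_nonneg (sub_nonneg.2 ha1) hb0]) (by ring)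
  rw [Real.mul_rpow ha0 hb0] at key
  linarith

lemma prod_one_sub_rpow_le (hα0 : 0 < α) (hα1 : α ≤ 1) {ι : Type*} (s : Finset ι) {q : ι → ℝ}
    (hq : ∀ i ∈ s, q i ∈ Icc (0 : ℝ) 1) :
    ∏ i ∈ s, (1 - q i ^ α) ≤ 1 - (1 - ∏ i ∈ s, (1 - q i)) ^ α := by
  induction s using Finset.cons_induction with
  | empty => simp [Real.zero_rpow hα0.ne']
  | cons j s hj ih =>
    simp only [Finset.forall_mem_cons] at hq
    have hprod : ∏ i ∈ s, (1 - q i) ∈ Icc (0 : ℝ) 1 :=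
      ⟨Finset.prod_nonneg fun i hi => sub_nonneg.2 (hq.2 i hi).2,
        Finset.prod_le_one (fun i hi => sub_nonneg.2 (hq.2 i hi).2)
          fun i hi => sub_le_self _ (hq.2 i hi).1⟩
    have hQ : 1 - ∏ i ∈ s, (1 - q i) ∈ Icc (0 : ℝ) 1 :=
      ⟨by linarith [hprod.2], by linarith [hprod.1]⟩
    rw [Finset.prod_cons, Finset.prod_cons]
    calc (1 - q j ^ α) * ∏ i ∈ s, (1 - q i ^ α)
        ≤ (1 - q j ^ α) * (1 - (1 - ∏ i ∈ s, (1 - q i)) ^ α) :=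
          mul_le_mul_of_nonneg_left (ih hq.2)
            (sub_nonneg.2 (Real.rpow_le_one hq.1.1 hq.1.2 hα0.le))
      _ ≤ _ := by simpa using one_sub_rpow_mul_one_sub_rpow_le hα0 hα1 hq.1 hQ

lemma one_add_sum_le_prod_one_add {ι : Type*} (s : Finset ι) {x : ι → ℝ} (hx : ∀ i ∈ s, 0 ≤ x i) :
    1 + ∑ i ∈ s, x i ≤ ∏ i ∈ s, (1 + x i) := by
  induction s using Finset.cons_induction with
  | empty => simp
  | cons j s hj ih =>
    simp only [Finset.forall_mem_cons] at hx
    rw [Finset.sum_cons, Finset.prod_cons]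
    have hs : 0 ≤ ∑ i ∈ s, x i := Finset.sum_nonneg hx.2
    nlinarith [ih hx.2, mul_nonneg hx.1 hs]

lemma prod_one_sub_div_rpow_le (hα0 : 0 < α) (hα1 : α ≤ 1) {ι : Type*} (s : Finset ι)
    {θ : ι → ℝ} (hθ : ∀ i ∈ s, 0 ≤ θ i) {β : ℝ} (hβ : 0 < β) :
    ∏ i ∈ s, (1 - (θ i / (β + θ i)) ^ α) ≤ 1 - ((∑ i ∈ s, θ i) / (β + ∑ i ∈ s, θ i)) ^ α := by
  have hq : ∀ i ∈ s, θ i / (β + θ i) ∈ Icc (0 : ℝ) 1 := fun i hi =>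
    ⟨div_nonneg (hθ i hi) (by linarith [hθ i hi]),
      div_le_one_of_le₀ (by linarith) (by linarith [hθ i hi])⟩
  have hΘ : 0 ≤ ∑ i ∈ s, θ i := Finset.sum_nonneg hθ
  refine (prod_one_sub_rpow_le hα0 hα1 s hq).trans
    (sub_le_sub_left (Real.rpow_le_rpow (div_nonneg hΘ (by linarith)) ?_ hα0.le) 1)
  have hprod : ∏ i ∈ s, (1 - θ i / (β + θ i)) = (∏ i ∈ s, (1 + θ i / β))⁻¹ := by
    rw [← Finset.prod_inv_distrib]
    refine Finset.prod_congr rfl fun i hi => ?_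
    have := hθ i hi
    field_simp
    ring
  have hweier := one_add_sum_le_prod_one_add s (x := fun i => θ i / β)
    fun i hi => div_nonneg (hθ i hi) hβ.le
  rw [← Finset.sum_div] at hweier
  calc (∑ i ∈ s, θ i) / (β + ∑ i ∈ s, θ i) = 1 - (1 + (∑ i ∈ s, θ i) / β)⁻¹ := by
        field_simp; ring
    _ ≤ 1 - (∏ i ∈ s, (1 + θ i / β))⁻¹ := by gcongr
    _ = _ := by rw [hprod]

end Scalar

noncomputable def paretoSurvival (α s : ℝ) : ℝ := if s ≤ 1 then 1 else s ^ (-α)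

lemma paretoSurvival_nonneg (α s : ℝ) : 0 ≤ paretoSurvival α s := by
  unfold paretoSurvival; split_ifs with hs
  · exact zero_le_one
  · exact Real.rpow_nonneg (by linarith) _

lemma mul_paretoSurvival_le_paretoSurvival_div {α c s : ℝ} (hα0 : 0 < α) (hα1 : α ≤ 1)
    (hc0 : 0 < c) (hc1 : c ≤ 1) (hs : 0 ≤ s) :
    c * paretoSurvival α s ≤ paretoSurvival α (s / c) := by
  have hcα : c ≤ c ^ α := Real.self_le_rpow_of_le_one hc0.le hc1 hα1
  have hdiv : ∀ {u}, 0 < u → (u / c) ^ (-α) = c ^ α * u ^ (-α) := fun hu => by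
    rw [Real.div_rpow hu.le hc0.le, Real.rpow_neg hc0.le, div_inv_eq_mul, mul_comm]
  unfold paretoSurvival
  split_ifs with h1 h2 h2
  · linarith
  · have hs0 : 0 < s := by
      by_contra! h
      exact h2 ((div_nonpos_of_nonpos_of_nonneg h hc0.le).trans zero_le_one)
    rw [hdiv hs0, mul_one]
    exact hcα.trans (le_mul_of_one_le_right (by positivity)
      (Real.one_le_rpow_of_pos_of_le_one_of_nonpos hs0 h1 (by linarith)))
  · exact mul_le_one₀ hc1 (by positivity)
      (Real.rpow_le_one_of_one_le_of_nonpos (by linarith) (by linarith))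
  · rw [hdiv (by linarith)]
    exact mul_le_mul_of_nonneg_right hcα (by positivity)

lemma Finset.mul_sub_one_le_sum_mul_sub_sum {ι : Type*} {S : Finset ι} {θ x : ι → ℝ}
    (hθ : ∀ j ∈ S, 0 ≤ θ j) (hx : ∀ j ∈ S, 1 ≤ x j) {i : ι} (hi : i ∈ S) :
    θ i * (x i - 1) ≤ ∑ j ∈ S, θ j * x j - ∑ j ∈ S, θ j := by
  rw [← Finset.sum_sub_distrib]
  simp_rw [← mul_sub_one]
  exact Finset.single_le_sum (fun j hj => mul_nonneg (hθ j hj) (sub_nonneg.2 (hx j hj))) hi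

namespace IsPareto

variable {Ω : Type*} [MeasurableSpace Ω] {P : Measure Ω} {X : Ω → ℝ} {α : ℝ}

lemma measure_one_lt (hX : IsPareto P X α) : P {ω | 1 < X ω} = 1 := by
  simpa using hX.2.2 1 le_rfl

variable [IsProbabilityMeasure P]

lemma ae_one_lt (hX : IsPareto P X α) : ∀ᵐ ω ∂P, 1 < X ω :=
  (ae_iff_prob_eq_one (measurableSet_setOfPred.1 (measurableSet_lt measurable_const hX.1))).2
    hX.measure_one_lt

lemma measure_lt (hX : IsPareto P X α) (s : ℝ) :
    P {ω | s < X ω} = ENNReal.ofReal (paretoSurvival α s) := by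
  unfold paretoSurvival
  split_ifs with hs
  · rw [ENNReal.ofReal_one]
    refine le_antisymm prob_le_one ?_
    rw [← hX.measure_one_lt]
    exact measure_mono fun ω (h : 1 < X ω) => hs.trans_lt h
  · exact hX.2.2 s (not_le.1 hs).le

lemma measureReal_mul_le (hX : IsPareto P X α) (hα : α ≠ 0) {c s : ℝ} (hc : 0 ≤ c)
    (hcs : c ≤ s) :
    P.real {ω | c * X ω ≤ s} = 1 - (c / s) ^ α := by
  rcases hc.eq_or_lt with rfl | hc
  · simp [hcs, Real.zero_rpow hα]
  have hs : 0 < s := hc.trans_le hcs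
  have hset : {ω | c * X ω ≤ s} = {ω | s / c < X ω}ᶜ := by
    ext ω; simp [div_lt_iff₀ hc, mul_comm]
  rw [hset, probReal_compl_eq_one_sub (measurableSet_lt measurable_const hX.1), measureReal_def,
    hX.2.2 _ ((one_le_div hc).2 hcs), ENNReal.toReal_ofReal (by positivity),
    Real.rpow_neg (by positivity), ← Real.inv_rpow (by positivity), inv_div]

end IsPareto

section WeightedSum

variable {Ω ι : Type*} [MeasurableSpace Ω] {P : Measure Ω} [IsProbabilityMeasure P] {α : ℝ}
  {Xs : ι → Ω → ℝ} {θ : ι → ℝ} {S : Finset ι}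

lemma measure_lt_sum_eq_one (hXs : ∀ i, IsPareto P (Xs i) α) (hθ : ∀ i ∈ S, 0 ≤ θ i)
    (hΘ : 0 < ∑ i ∈ S, θ i) {t : ℝ} (ht : t ≤ ∑ i ∈ S, θ i) :
    P {ω | t < ∑ i ∈ S, θ i * Xs i ω} = 1 := by
  refine le_antisymm prob_le_one (measure_univ (μ := P) ▸ measure_mono_ae ?_)
  filter_upwards [(Filter.eventually_all_finset S).2 fun i _ => (hXs i).ae_one_lt] with ω hω _
  obtain ⟨i, hi, hθi⟩ := Finset.exists_lt_of_sum_lt (f := fun _ => 0) (g := θ)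
    (by rwa [Finset.sum_const_zero])
  have := Finset.mul_sub_one_le_sum_mul_sub_sum hθ (fun j hj => (hω j hj).le) hi
  show t < _
  nlinarith [mul_pos hθi (sub_pos.2 (hω i hi))]

/-- Since `ENNReal.ofReal (paretoSurvival α (t / Θ)) = P(Θ X > t)` for `X` Pareto(α), this is the
stochastic dominance `Θ X ≤_st ∑ θᵢ Xᵢ`. -/
theorem paretoSurvival_div_sum_le_measure_lt_sum (hα0 : 0 < α) (hα1 : α ≤ 1)
    (hXs : ∀ i, IsPareto P (Xs i) α) (hind : iIndepFun Xs P) (hθ : ∀ i ∈ S, 0 ≤ θ i)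
    (hΘ : 0 < ∑ i ∈ S, θ i) (t : ℝ) :
    ENNReal.ofReal (paretoSurvival α (t / ∑ i ∈ S, θ i)) ≤ P {ω | t < ∑ i ∈ S, θ i * Xs i ω} := by
  set Θ := ∑ i ∈ S, θ i
  rcases le_or_gt t Θ with ht | ht
  · rw [paretoSurvival, if_pos ((div_le_one hΘ).2 ht), ENNReal.ofReal_one,
      measure_lt_sum_eq_one hXs hθ hΘ ht]
  have hone_lt : ∀ᵐ ω ∂P, ∀ i ∈ S, 1 < Xs i ω :=
    (Filter.eventually_all_finset S).2 fun i _ => (hXs i).ae_one_lt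
  set β := t - Θ
  have hβ : 0 < β := sub_pos.2 ht
  set E := ⋂ i ∈ S, Xs i ⁻¹' {x | θ i * x ≤ β + θ i}
  have hE : MeasurableSet E :=
    .biInter S.countable_toSet fun i _ => (hXs i).1 (measurableSet_le (by fun_prop) (by fun_prop))
  have hPE : P.real E = ∏ i ∈ S, (1 - (θ i / (β + θ i)) ^ α) := by
    rw [measureReal_def, hind.measure_inter_preimage_eq_mul S
      fun i _ => measurableSet_le (by fun_prop) (by fun_prop), ENNReal.toReal_prod]
    exact Finset.prod_congr rfl fun i hi =>
      (hXs i).measureReal_mul_le hα0.ne' (hθ i hi) (by linarith [hθ i hi])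
  have hEc : Eᶜ ≤ᵐ[P] {ω | t < ∑ i ∈ S, θ i * Xs i ω} := by
    filter_upwards [hone_lt] with ω hω hωE
    obtain ⟨i, hi, hθi⟩ : ∃ i ∈ S, β + θ i < θ i * Xs i ω := by
      have hωE : ω ∈ Eᶜ := hωE
      simpa [E] using hωE
    have := Finset.mul_sub_one_le_sum_mul_sub_sum hθ (fun j hj => (hω j hj).le) hi
    show t < _
    linarith
  have htΘ : t = β + Θ := by ring
  have ht0 : 0 < t := hΘ.trans ht
  calc ENNReal.ofReal (paretoSurvival α (t / Θ)) = ENNReal.ofReal ((Θ / t) ^ α) := by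
        rw [paretoSurvival, if_neg (by rw [not_le, one_lt_div hΘ]; exact ht),
          Real.rpow_neg (div_pos ht0 hΘ).le, ← Real.inv_rpow (div_pos ht0 hΘ).le, inv_div]
    _ ≤ ENNReal.ofReal (P.real Eᶜ) := by
        rw [probReal_compl_eq_one_sub hE, hPE, htΘ]
        exact ENNReal.ofReal_le_ofReal (by linarith [prod_one_sub_div_rpow_le hα0 hα1 S hθ hβ])
    _ = P Eᶜ := ofReal_measureReal
    _ ≤ _ := measure_mono_ae hEc

lemma ofReal_sum_div_mul_paretoSurvival_le_measure_lt_sum (hα0 : 0 < α) (hα1 : α ≤ 1)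
    (hXs : ∀ i, IsPareto P (Xs i) α) (hind : iIndepFun Xs P) (hθ : ∀ i ∈ S, 0 ≤ θ i)
    {lam t : ℝ} (hlam : ∑ i ∈ S, θ i ≤ lam) (ht : 0 ≤ t) :
    ENNReal.ofReal ((∑ i ∈ S, θ i) / lam * paretoSurvival α (t / lam))
      ≤ P {ω | t < ∑ i ∈ S, θ i * Xs i ω} := by
  rcases (Finset.sum_nonneg hθ).eq_or_lt with hΘ | hΘ
  · simp [← hΘ]
  have hlam0 := hΘ.trans_le hlam
  refine le_trans (ENNReal.ofReal_le_ofReal ?_)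
    (paretoSurvival_div_sum_le_measure_lt_sum hα0 hα1 hXs hind hθ hΘ t)
  have := mul_paretoSurvival_le_paretoSurvival_div hα0 hα1 (div_pos hΘ hlam0)
    ((div_le_one hlam0).2 hlam) (div_nonneg ht hlam0.le)
  rwa [div_div_div_cancel_right₀ hlam0.ne'] at this

end WeightedSum

section Occurring

variable {ι Ω : Type*} [Fintype ι] {A : ι → Set Ω}

open scoped Classical in
noncomputable def occurring (A : ι → Set Ω) (ω : Ω) : Finset ι :=
  Finset.univ.filter (ω ∈ A ·)

@[simp]
lemma mem_occurring {ω : Ω} {i : ι} : i ∈ occurring A ω ↔ ω ∈ A i := by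
  simp [occurring]

lemma sum_mul_indicator_eq_sum_occurring (f : ι → ℝ) (ω : Ω) :
    ∑ i, f i * (A i).indicator (fun _ => (1 : ℝ)) ω = ∑ i ∈ occurring A ω, f i := by
  classical
  simp [occurring, Finset.sum_filter, Set.indicator_apply]

lemma occurring_preimage_singleton (S : Finset ι) :
    occurring A ⁻¹' {S}
      = (fun ω i => (A i).indicator (fun _ => (1 : ℝ)) ω) ⁻¹' {v | ∀ i, v i = 1 ↔ i ∈ S} := by
  ext ω
  simp [Finset.ext_iff]

variable [MeasurableSpace Ω]

lemma measurableSet_occurring_preimage (hA : ∀ i, MeasurableSet (A i)) (S : Finset ι) :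
    MeasurableSet (occurring A ⁻¹' {S}) := by
  rw [occurring_preimage_singleton]
  exact measurable_pi_lambda _ (fun i => measurable_const.indicator (hA i)) (by measurability)

lemma measure_eq_sum_measure_occurring_inter (hA : ∀ i, MeasurableSet (A i)) (P : Measure Ω)
    (C : Set Ω) : P C = ∑ S, P (occurring A ⁻¹' {S} ∩ C) := by
  have := sum_measure_preimage_singleton (μ := P.restrict C) Finset.univ
    fun S _ => measurableSet_occurring_preimage hA S
  simp only [Finset.coe_univ, preimage_univ, Measure.restrict_apply_univ] at this
  rw [← this]
  exact Finset.sum_congr rfl fun S _ =>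
    Measure.restrict_apply (measurableSet_occurring_preimage hA S)

lemma sum_sum_mul_measure_occurring (hA : ∀ i, MeasurableSet (A i)) (P : Measure Ω)
    (c : ι → ENNReal) :
    ∑ S, (∑ i ∈ S, c i) * P (occurring A ⁻¹' {S}) = ∑ i, c i * P (A i) := by
  classical
  have hinter : ∀ S i,
      occurring A ⁻¹' {S} ∩ A i = if i ∈ S then occurring A ⁻¹' {S} else ∅ := by
    intro S i
    split_ifs with hi
    · exact inter_eq_left.2 fun ω (hω : occurring A ω = S) => mem_occurring.1 (hω ▸ hi)
    · exact eq_empty_of_forall_notMem fun ω ⟨(hω : occurring A ω = S), hωi⟩ =>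
        hi (hω ▸ mem_occurring.2 hωi)
  simp_rw [measure_eq_sum_measure_occurring_inter hA P (A _), Finset.mul_sum]
  rw [Finset.sum_comm]
  refine Finset.sum_congr rfl fun S _ => ?_
  simp [hinter, Finset.sum_mul, apply_ite]

end Occurring

section Decomposition

variable {ι Ω : Type*} [Fintype ι] [MeasurableSpace Ω] {P : Measure Ω} {A : ι → Set Ω}
  {Xs : ι → Ω → ℝ}

lemma measure_lt_sum_mul_indicator_eq_sum (hA : ∀ i, MeasurableSet (A i))
    (hindA : IndepFun (fun ω i => Xs i ω) (fun ω i => (A i).indicator (fun _ => (1 : ℝ)) ω) P)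
    (θ : ι → ℝ) (t : ℝ) :
    P {ω | t < ∑ i, θ i * Xs i ω * (A i).indicator (fun _ => (1 : ℝ)) ω}
      = ∑ S, P {ω | t < ∑ i ∈ S, θ i * Xs i ω} * P (occurring A ⁻¹' {S}) := by
  rw [measure_eq_sum_measure_occurring_inter hA]
  refine Finset.sum_congr rfl fun S _ => ?_
  have hset :
      occurring A ⁻¹' {S} ∩ {ω | t < ∑ i, θ i * Xs i ω * (A i).indicator (fun _ => 1) ω}
      = (fun ω i => Xs i ω) ⁻¹' {v | t < ∑ i ∈ S, θ i * v i} ∩ occurring A ⁻¹' {S} := by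
    ext ω
    simp only [mem_inter_iff, mem_preimage, mem_singleton_iff, mem_ofPred_eq,
      sum_mul_indicator_eq_sum_occurring (fun i => θ i * Xs i ω)]
    constructor
    · rintro ⟨rfl, h⟩; exact ⟨h, rfl⟩
    · rintro ⟨h, rfl⟩; exact ⟨rfl, h⟩
  rw [hset, occurring_preimage_singleton, hindA.measure_inter_preimage_eq_mul _ _
    (measurableSet_lt measurable_const (by fun_prop)) (by measurability)]
  rfl

end Decomposition

lemma ProbabilityTheory.IndepFun.measure_lt_mul_mul_indicator {Ω : Type*} [MeasurableSpace Ω]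
    {P : Measure Ω} {X : Ω → ℝ} {A : Set Ω} (h : IndepFun X (A.indicator fun _ => (1 : ℝ)) P)
    {c t : ℝ} (hc : 0 < c) (ht : 0 ≤ t) :
    P {ω | t < c * X ω * A.indicator (fun _ => (1 : ℝ)) ω} = P {ω | t / c < X ω} * P A := by
  have hset : {ω | t < c * X ω * A.indicator (fun _ => (1 : ℝ)) ω}
      = X ⁻¹' Ioi (t / c) ∩ A.indicator (fun _ => (1 : ℝ)) ⁻¹' {1} := by
    ext ω
    by_cases hω : ω ∈ A <;> simp [hω, div_lt_iff₀ hc, mul_comm, ht]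
  rw [hset, h.measure_inter_preimage_eq_mul _ _ measurableSet_Ioi (measurableSet_singleton 1)]
  congr
  ext ω
  simp

theorem stmt12_general {Ω : Type*} [MeasurableSpace Ω] (P : Measure Ω) [IsProbabilityMeasure P]
    (n : ℕ) (α : ℝ) (hα : α ∈ Set.Ioc (0:ℝ) 1)
    (Xs : Fin n → Ω → ℝ) (hXs : ∀ i, IsPareto P (Xs i) α)
    (hind : iIndepFun Xs P)
    (A : Fin n → Set Ω) (hAmeas : ∀ i, MeasurableSet (A i))
    (hindA : IndepFun (fun ω i => Xs i ω)
      (fun ω i => (A i).indicator (fun _ => (1:ℝ)) ω) P)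
    (θ : Fin n → ℝ) (hθ : ∀ i, 0 ≤ θ i)
    (lam : ℝ) (hlam : ∑ i, θ i ≤ lam)
    (X : Ω → ℝ) (hX : IsPareto P X α)
    (A₀ : Set Ω)
    (hindX : IndepFun X (A₀.indicator (fun _ => (1:ℝ))) P)
    (hPA : ENNReal.ofReal lam * P A₀ = ∑ i, ENNReal.ofReal (θ i) * P (A i)) :
    ∀ t : ℝ, P {ω | t < lam * X ω * A₀.indicator (fun _ => (1:ℝ)) ω}
      ≤ P {ω | t < ∑ i, θ i * Xs i ω * (A i).indicator (fun _ => (1:ℝ)) ω} := by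
  intro t
  obtain ⟨hα0, hα1⟩ := hα
  rcases lt_or_ge t 0 with ht | ht
  · refine prob_le_one.trans (measure_univ (μ := P) ▸ measure_mono_ae ?_)
    filter_upwards [ae_all_iff.2 fun i => (hXs i).ae_one_lt] with ω hω _
    exact ht.trans_le <| Finset.sum_nonneg fun i _ =>
      mul_nonneg (mul_nonneg (hθ i) (by linarith [hω i]))
        (indicator_nonneg (fun _ _ => zero_le_one) _)
  rcases ((Finset.sum_nonneg fun i _ => hθ i).trans hlam).eq_or_lt with rfl | hlam0
  · simp [ht.not_gt]
  set F := paretoSurvival α (t / lam)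
  calc P {ω | t < lam * X ω * A₀.indicator (fun _ => (1:ℝ)) ω}
      = ENNReal.ofReal F * P A₀ := by
        rw [hindX.measure_lt_mul_mul_indicator hlam0 ht, hX.measure_lt]
    _ = ENNReal.ofReal (F / lam) * ∑ i, ENNReal.ofReal (θ i) * P (A i) := by
        rw [← hPA, ← mul_assoc,
          ← ENNReal.ofReal_mul (div_nonneg (paretoSurvival_nonneg _ _) hlam0.le),
          div_mul_cancel₀ _ hlam0.ne']
    _ = ∑ S, ENNReal.ofReal ((∑ i ∈ S, θ i) / lam * F) * P (occurring A ⁻¹' {S}) := by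
        rw [← sum_sum_mul_measure_occurring hAmeas, Finset.mul_sum]
        refine Finset.sum_congr rfl fun S _ => ?_
        rw [← mul_assoc, ← ENNReal.ofReal_sum_of_nonneg (fun i _ => hθ i),
          ← ENNReal.ofReal_mul (div_nonneg (paretoSurvival_nonneg _ _) hlam0.le), div_mul_comm]
    _ ≤ ∑ S, P {ω | t < ∑ i ∈ S, θ i * Xs i ω} * P (occurring A ⁻¹' {S}) :=
        Finset.sum_le_sum fun S _ => mul_le_mul_left
          (ofReal_sum_div_mul_paretoSurvival_le_measure_lt_sum hα0 hα1 hXs hind (fun i _ => hθ i)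
            ((Finset.sum_le_sum_of_subset_of_nonneg (Finset.subset_univ S)
              fun i _ _ => hθ i).trans hlam) ht) _
    _ = _ := (measure_lt_sum_mul_indicator_eq_sum hAmeas hindA θ t).symm

/-- Catastrophic-loss model: for iid Pareto(α), `α ∈ (0,1]`, events `A₁,…,Aₙ`
independent of the losses, nonnegative exposures `θᵢ`, `λ ≥ ∑ θᵢ`, and a Pareto(α)
variable `X` independent of an event `A` with `λ·P(A) = ∑ θᵢ P(Aᵢ)`, we have
`λ·X·𝟙_A ≤_st ∑ θᵢ Xᵢ 𝟙_{Aᵢ}`. -/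
theorem stmt12 {Ω : Type*} [MeasurableSpace Ω] (P : Measure Ω) [IsProbabilityMeasure P]
    (n : ℕ) (α : ℝ) (hα : α ∈ Set.Ioc (0:ℝ) 1)
    (Xs : Fin n → Ω → ℝ) (hXs : ∀ i, IsPareto P (Xs i) α)
    (hind : iIndepFun Xs P)
    (A : Fin n → Set Ω) (hAmeas : ∀ i, MeasurableSet (A i))
    (hindA : IndepFun (fun ω i => Xs i ω)
      (fun ω i => (A i).indicator (fun _ => (1:ℝ)) ω) P)
    (θ : Fin n → ℝ) (hθ : ∀ i, 0 ≤ θ i)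
    (lam : ℝ) (hlam : ∑ i, θ i ≤ lam)
    (X : Ω → ℝ) (hX : IsPareto P X α)
    (A₀ : Set Ω) (hA₀ : MeasurableSet A₀)
    (hindX : IndepFun X (A₀.indicator (fun _ => (1:ℝ))) P)
    (hPA : ENNReal.ofReal lam * P A₀ = ∑ i, ENNReal.ofReal (θ i) * P (A i)) :
    ∀ t : ℝ, P {ω | t < lam * X ω * A₀.indicator (fun _ => (1:ℝ)) ω}
      ≤ P {ω | t < ∑ i, θ i * Xs i ω * (A i).indicator (fun _ => (1:ℝ)) ω} :=
  stmt12_general P n α hα Xs hXs hind A hAmeas hindA θ hθ lam hlam X hX A₀ hindX hPA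
end
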